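/- arXiv:2512.08915 — 3 statements merged into one kernel-verified Lean document; each statement's English description precedes it below -/
import Mathlib

section
/- Let G be a group and let Δ and Σ be subgroups of G such that Σ normalizes Δ (i.e. σΔσ⁻¹ = Δ for all σ ∈ Σ). Let r : Δ → G be a group homomorphism such that r(Δ) ⊆ Σ, r(δ) = δ for all δ ∈ Δ ∩ Σ, and r(σδσ⁻¹) = σ r(δ) σ⁻¹ for all σ ∈ Σ and δ ∈ Δ. Then there exists a group homomorphism r' from the subgroup generated by Δ and Σ (which equals the set ΔΣ = {δσ : δ ∈ Δ, σ ∈ Σ}) to G satisfying r'(δσ) = r(δ)σ for all δ ∈ Δ and σ ∈ Σ; in particular r'(σ) = σ for all σ ∈ Σ and the image of r' is contained in Σ. -/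
/-!
Since `Σ` normalizes `Δ`, multiplication `(δ, σ) ↦ δσ` is a surjective homomorphism
`Δ ⋊ Σ → Δ ⊔ Σ` whose kernel consists of the pairs `(δ, δ⁻¹)` with `δ ∈ Δ ∩ Σ`. The
conjugation equivariance of `r` makes `(δ, σ) ↦ r(δ)σ` a homomorphism on `Δ ⋊ Σ`, and `r`
fixing `Δ ∩ Σ` pointwise makes it kill that kernel, so it descends to `Δ ⊔ Σ`.
The same argument glues any two homomorphisms `f : H →* M`, `g : K →* M` compatible in this
sense.
-/

namespace Subgroup

variable {G M : Type*} [Group G] [Group M] {H K : Subgroup G}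

def semidirectProductToSup (hK : K ≤ normalizer (H : Set G)) :
    H ⋊[H.normalizerMonoidHom.comp (inclusion hK)] K →* ↥(H ⊔ K) :=
  (SemidirectProduct.monoidHomSubgroup hK).codRestrict _ fun x ↦
    mul_mem (mem_sup_left x.left.2) (mem_sup_right x.right.2)

theorem semidirectProductToSup_surjective (hK : K ≤ normalizer (H : Set G)) :
    Function.Surjective (semidirectProductToSup hK) := by
  rintro ⟨x, hx⟩
  rw [← SetLike.mem_coe, coe_mul_of_right_le_normalizer_left H K hK] at hx
  obtain ⟨h, hh, k, hk, rfl⟩ := hx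
  exact ⟨⟨⟨h, hh⟩, ⟨k, hk⟩⟩, rfl⟩

variable (hK : K ≤ normalizer (H : Set G)) (f : H →* M) (g : K →* M)
  (hconj : ∀ (k : K) (h : H) (hc : (k : G) * h * (k : G)⁻¹ ∈ H),
    f ⟨k * h * (k : G)⁻¹, hc⟩ = g k * f h * (g k)⁻¹)

def semidirectProductLift : H ⋊[H.normalizerMonoidHom.comp (inclusion hK)] K →* M :=
  SemidirectProduct.lift f g fun k ↦ by
    ext h
    exact hconj k h _

theorem ker_semidirectProductToSup_le
    (hinf : ∀ (x : G) (hxH : x ∈ H) (hxK : x ∈ K), f ⟨x, hxH⟩ = g ⟨x, hxK⟩) :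
    (semidirectProductToSup hK).ker ≤ (semidirectProductLift hK f g hconj).ker := by
  rintro ⟨⟨h, hh⟩, ⟨k, hk⟩⟩ hx
  obtain rfl : h = k⁻¹ := eq_inv_of_mul_eq_one_left (congrArg Subtype.val hx)
  change f ⟨k⁻¹, hh⟩ * g ⟨k, hk⟩ = 1
  rw [hinf k⁻¹ hh (inv_mem hk), ← map_mul, ← map_one g]
  exact congrArg g (inv_mul_cancel (⟨k, hk⟩ : K))

variable (hinf : ∀ (x : G) (hxH : x ∈ H) (hxK : x ∈ K), f ⟨x, hxH⟩ = g ⟨x, hxK⟩)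

noncomputable def liftSup : ↥(H ⊔ K) →* M :=
  (semidirectProductToSup hK).liftOfSurjective (semidirectProductToSup_surjective hK)
    ⟨semidirectProductLift hK f g hconj, ker_semidirectProductToSup_le hK f g hconj hinf⟩

theorem liftSup_semidirectProductToSup (x : H ⋊[H.normalizerMonoidHom.comp (inclusion hK)] K) :
    liftSup hK f g hconj hinf (semidirectProductToSup hK x) = f x.left * g x.right :=
  MonoidHom.liftOfRightInverse_comp_apply _ _ _ _ x

theorem liftSup_mk_mul {h k : G} (hh : h ∈ H) (hk : k ∈ K) :
    liftSup hK f g hconj hinf ⟨h * k, mul_mem (mem_sup_left hh) (mem_sup_right hk)⟩ =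
      f ⟨h, hh⟩ * g ⟨k, hk⟩ :=
  liftSup_semidirectProductToSup hK f g hconj hinf ⟨⟨h, hh⟩, ⟨k, hk⟩⟩

theorem liftSup_mk_of_mem_right {k : G} (hk : k ∈ K) :
    liftSup hK f g hconj hinf ⟨k, mem_sup_right hk⟩ = g ⟨k, hk⟩ := by
  simpa [show (⟨1, one_mem H⟩ : H) = 1 from rfl] using
    liftSup_mk_mul hK f g hconj hinf (one_mem H) hk

theorem range_liftSup_le : (liftSup hK f g hconj hinf).range ≤ f.range ⊔ g.range := by
  rintro _ ⟨x, rfl⟩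
  obtain ⟨⟨h, k⟩, rfl⟩ := semidirectProductToSup_surjective hK x
  rw [liftSup_semidirectProductToSup]
  exact mul_mem (mem_sup_left ⟨h, rfl⟩) (mem_sup_right ⟨k, rfl⟩)

end Subgroup

theorem exists_retraction_on_join {G : Type*} [Group G] (Δ S : Subgroup G)
    (hnorm : S ≤ Subgroup.normalizer (Δ : Set G))
    (r : Δ →* G)
    (hrange : ∀ δ : Δ, r δ ∈ S)
    (hid : ∀ δ : Δ, (δ : G) ∈ S → r δ = (δ : G))
    (hconj : ∀ σ : G, σ ∈ S → ∀ (δ : Δ) (h : σ * (δ : G) * σ⁻¹ ∈ Δ),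
      r ⟨σ * (δ : G) * σ⁻¹, h⟩ = σ * r δ * σ⁻¹) :
    ∃ r' : (Δ ⊔ S : Subgroup G) →* G,
      (∀ (δ σ : G) (hδ : δ ∈ Δ) (hσ : σ ∈ S),
        r' ⟨δ * σ, mul_mem ((le_sup_left : Δ ≤ Δ ⊔ S) hδ)
          ((le_sup_right : S ≤ Δ ⊔ S) hσ)⟩ = r ⟨δ, hδ⟩ * σ) ∧
      (∀ (σ : G) (hσ : σ ∈ S), r' ⟨σ, (le_sup_right : S ≤ Δ ⊔ S) hσ⟩ = σ) ∧
      (∀ x : (Δ ⊔ S : Subgroup G), r' x ∈ S) := by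
  have hconj' := fun (σ : S) (δ : Δ) ↦ hconj σ σ.2 δ
  have hinf := fun (x : G) (hx : x ∈ Δ) ↦ hid ⟨x, hx⟩
  refine ⟨Subgroup.liftSup hnorm r S.subtype hconj' hinf,
    fun δ σ hδ hσ ↦ Subgroup.liftSup_mk_mul hnorm r S.subtype hconj' hinf hδ hσ,
    fun σ hσ ↦ Subgroup.liftSup_mk_of_mem_right hnorm r S.subtype hconj' hinf hσ,
    fun x ↦ ?_⟩
  have hrange_le : r.range ⊔ S.subtype.range ≤ S :=
    sup_le (by rintro _ ⟨δ, rfl⟩; exact hrange δ) S.range_subtype.le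
  exact hrange_le (Subgroup.range_liftSup_le hnorm r S.subtype hconj' hinf ⟨x, rfl⟩)
end

section
/- Let G be a group, p a natural number, and for each i ∈ {1, …, p} let H_i be a subgroup of G and r_i : G → H_i a retraction (a group homomorphism with r_i(h) = h for all h ∈ H_i) such that r_i(H_j) = {1} whenever j ≠ i. Then the group homomorphism from the direct product ∏_{i=1}^p Ab(H_i) of the abelianizations of the H_i to the abelianization Ab(G) of G, defined as the product of the maps induced by the inclusions H_i ↪ G, is injective. -/
/-!
Each `r j` induces `Ab(G) → Ab(H j)`, which is the identity on the image of `Ab(H j)` and kills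
the images of the other `Ab(H i)`. Composing with it therefore recovers the `j`-th coordinate
from the product, so the product map has a left inverse.
-/

theorem injective_prod_of_orthogonal_leftInverses {ι B : Type*} [Fintype ι] {A : ι → Type*}
    [∀ i, CommMonoid (A i)] [CommMonoid B] (φ : ∀ i, A i →* B) (ψ : ∀ i, B →* A i)
    (hψφ : ∀ i a, ψ i (φ i a) = a) (hψφ_ne : ∀ i j, i ≠ j → ∀ a, ψ j (φ i a) = 1) :
    Function.Injective (fun x : ∀ i, A i => ∏ i, φ i (x i)) := by
  have recover : ∀ (x : ∀ i, A i) j, ψ j (∏ i, φ i (x i)) = x j := by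
    intro x j
    rw [map_prod, Finset.prod_eq_single j (fun i _ hij => hψφ_ne i j hij _)
      (fun hj => (hj (Finset.mem_univ j)).elim), hψφ]
  intro x y hxy
  funext j
  rw [← recover x j, ← recover y j]
  exact congrArg (ψ j) hxy

namespace Abelianization

variable {G : Type*} [Group G]

theorem map_map_subtype_of_retraction {K : Subgroup G} (f : G →* K)
    (hf : ∀ g ∈ K, (f g : G) = g) (a : Abelianization K) : map f (map K.subtype a) = a := by
  rw [map_map_apply, show f.comp K.subtype = MonoidHom.id K from
    MonoidHom.ext fun k => Subtype.ext (hf k k.2), map_id, MonoidHom.id_apply]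

theorem map_map_subtype_eq_one {K : Subgroup G} {L : Type*} [Group L]
    (f : G →* L) (hf : ∀ g ∈ K, f g = 1) (a : Abelianization K) : map f (map K.subtype a) = 1 := by
  induction a using QuotientGroup.induction_on with
  | H k =>
    change map f (map K.subtype (of k)) = 1
    rw [map_of, map_of, K.subtype_apply, hf k k.2, map_one]

end Abelianization

theorem abelianization_product_injective {G : Type*} [Group G] (p : ℕ)
    (H : Fin p → Subgroup G) (r : ∀ i, G →* H i)
    (hret : ∀ (i : Fin p) (h : G), h ∈ H i → (r i h : G) = h)
    (htriv : ∀ i j : Fin p, j ≠ i → ∀ h : G, h ∈ H j → (r i h : G) = 1) :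
    Function.Injective (fun x : ∀ i : Fin p, Abelianization (H i) =>
      ∏ i : Fin p, Abelianization.map (H i).subtype (x i)) :=
  injective_prod_of_orthogonal_leftInverses (fun i => Abelianization.map (H i).subtype)
    (fun i => Abelianization.map (r i))
    (fun i => Abelianization.map_map_subtype_of_retraction (r i) (hret i))
    (fun i j hij => Abelianization.map_map_subtype_eq_one (r j)
      fun h hh => Subtype.ext (htriv j i hij h hh))
end

section
/- Let G be a group, p a natural number, and for each i ∈ {1, …, p} let H_i be a subgroup of G and r_i : G → H_i a retraction (a group homomorphism with r_i(h) = h for all h ∈ H_i) such that r_i(H_j) = {1} whenever j ≠ i. If for each i the abelianization Ab(H_i) contains an element of order 2, then there is an injective group homomorphism from (ℤ/2ℤ)^p into the abelianization Ab(G); in particular the torsion subgroup of Ab(G) has order at least 2^p. -/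
/-!
Composing a retraction `rᵢ` with the inclusion of `Hⱼ` gives the identity for `j = i` and the
trivial map for `j ≠ i`, and by functoriality the same holds for the induced maps between
abelianizations. Hence `Ab(G)` contains the product of the `Ab(Hᵢ)` as a retract, and choosing an
element of order two in each `Ab(Hᵢ)` embeds `(ℤ/2ℤ)ᵖ` into `Ab(G)`; its image is finite, so it
lies in the torsion subgroup.
-/

open Function Cardinal

theorem exists_injective_multiplicative_zmod_of_orderOf_eq {M : Type*} [Group M] {a : M}
    {n : ℕ} (ha : orderOf a = n) : ∃ φ : Multiplicative (ZMod n) →* M, Injective φ := by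
  have hgen : ∀ x : Subgroup.zpowers a, x ∈ Subgroup.zpowers ⟨a, Subgroup.mem_zpowers a⟩ := by
    rintro ⟨_, k, rfl⟩
    exact ⟨k, Subtype.ext (by simp)⟩
  let e := zmodMulEquivOfGenerator hgen (Nat.card_zpowers a |>.trans ha)
  exact ⟨(Subgroup.zpowers a).subtype.comp e.toMonoidHom, Subtype.val_injective.comp e.injective⟩

theorem MonoidHom.noncommPiCoprod_injective_of_comp {ι : Type*} [Fintype ι] [DecidableEq ι]
    {A C : ι → Type*} [∀ i, Monoid (A i)] [∀ i, Monoid (C i)] {B : Type*} [Monoid B]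
    (inc : ∀ i, A i →* B) (proj : ∀ i, B →* C i)
    (hcomm : Pairwise fun i j => ∀ x y, Commute (inc i x) (inc j y))
    (hsame : ∀ i, Injective (proj i ∘ inc i)) (hdiff : ∀ i j, i ≠ j → (proj j).comp (inc i) = 1) :
    Injective (noncommPiCoprod inc hcomm) := by
  have hleft : (pi proj).comp (noncommPiCoprod inc hcomm) =
      pi fun i => (proj i).comp ((inc i).comp (Pi.evalMonoidHom A i)) := by
    refine pi_ext fun i x => funext fun j => ?_
    obtain rfl | hij := eq_or_ne i j
    · simp
    · simpa [Pi.mulSingle_eq_of_ne' hij] using DFunLike.congr_fun (hdiff i j hij) x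
  have : Injective ((pi proj).comp (noncommPiCoprod inc hcomm)) := by
    rw [hleft]
    exact Injective.piMap hsame
  rw [coe_comp] at this
  exact this.of_comp

namespace Abelianization

variable {G H : Type*} [Group G] [Group H] {f : H →* G} {g : G →* H}

theorem map_comp_map_eq_id (h : g.comp f = MonoidHom.id H) :
    (map g).comp (map f) = MonoidHom.id (Abelianization H) := by
  rw [map_comp, h, map_id]

theorem map_comp_map_eq_one {K : Type*} [Group K] {k : G →* K} (h : k.comp f = 1) :
    (map k).comp (map f) = 1 := by
  rw [map_comp, h]
  ext
  simp

end Abelianization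

theorem CommGroup.natCard_le_mk_torsion_of_injective {F M : Type*} [Group F]
    [Finite F] [CommGroup M] {ψ : F →* M} (hψ : Injective ψ) :
    (Nat.card F : Cardinal) ≤ #(CommGroup.torsion M) := by
  let f : F → CommGroup.torsion M := fun x => ⟨ψ x, ψ.isOfFinOrder (isOfFinOrder_of_finite x)⟩
  have hf : Injective f := fun x y hxy => hψ (congrArg Subtype.val hxy)
  simpa [← Nat.cast_card] using lift_mk_le_lift_mk_of_injective hf

theorem two_torsion_in_abelianization {G : Type*} [Group G] (p : ℕ)
    (H : Fin p → Subgroup G) (r : ∀ i, G →* H i)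
    (hret : ∀ (i : Fin p) (h : G), h ∈ H i → (r i h : G) = h)
    (htriv : ∀ i j : Fin p, j ≠ i → ∀ h : G, h ∈ H j → (r i h : G) = 1)
    (h2 : ∀ i : Fin p, ∃ a : Abelianization (H i), orderOf a = 2) :
    (∃ ψ : (Fin p → Multiplicative (ZMod 2)) →* Abelianization G, Function.Injective ψ) ∧
    2 ^ p ≤ Cardinal.mk (CommGroup.torsion (Abelianization G)) := by
  choose a ha using h2
  choose φ hφ using fun i => exists_injective_multiplicative_zmod_of_orderOf_eq (ha i)
  have hsame (i : Fin p) : (r i).comp (H i).subtype = MonoidHom.id (H i) := by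
    ext h
    exact hret i h h.2
  have hdiff (i j : Fin p) (hij : i ≠ j) : (r j).comp (H i).subtype = 1 := by
    ext h
    exact htriv j i hij h h.2
  let ψ := MonoidHom.noncommPiCoprod (fun i => (Abelianization.map (H i).subtype).comp (φ i))
    fun _ _ _ _ _ => Commute.all _ _
  have hψ : Injective ψ := by
    refine MonoidHom.noncommPiCoprod_injective_of_comp _ (fun i => Abelianization.map (r i)) _
      (fun i => ?_) fun i j hij => ?_
    · rw [← MonoidHom.coe_comp, ← MonoidHom.comp_assoc,
        Abelianization.map_comp_map_eq_id (hsame i), MonoidHom.id_comp]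
      exact hφ i
    · rw [← MonoidHom.comp_assoc, Abelianization.map_comp_map_eq_one (hdiff i j hij),
        MonoidHom.one_comp]
  refine ⟨⟨ψ, hψ⟩, ?_⟩
  simpa using CommGroup.natCard_le_mk_torsion_of_injective hψ
end
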